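/- arXiv:1710.01939 — 2 statements merged into one kernel-verified Lean document; each statement's English description precedes it below -/
import Mathlib

section
/- With the sets A_k and A = ⋃_{k≥1} A_k defined as follows: n₁ = 1, n_{k+1} = 2^{2n_k+2}, A_k = {n_k+1, ..., n_k + 2^{n_k+1}} ∪ {3·2^{n_k}, ..., (2^{n_k+1}+2)·2^{n_k}}, one has liminf_{n→∞} A(n)/√n ≤ 2, where A(n) = |{a ∈ A : a ≤ n}|. -/
/-
At `n = n_{k+1} = 2 ^ (2 n_k + 2)` one has `√n = 2 ^ (n_k + 1)`. The blocks `A_j` with `j < k`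
lie below `n_k`, those with `j > k` lie above `n_{k+1}`, and `A_k` has at most `2 ^ (n_k + 2)`
elements, so `A(n_{k+1}) / √n_{k+1} ≤ 2 + (n_k + 1) / 2 ^ (n_k + 1)`, which tends to `2`.
-/

/-- The recursive sequence: n₁ = 1, n_{k+1} = 2^{2 n_k + 2} (indexed from 0). -/
def nSeq : ℕ → ℕ
  | 0 => 1
  | k + 1 => 2 ^ (2 * nSeq k + 2)

/-- A_k = [n_k+1, n_k+2^{n_k+1}] ∪ {j·2^{n_k} : 3 ≤ j ≤ 2^{n_k+1}+2}. -/
def Ablock (k : ℕ) : Set ℕ :=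
  {m | (nSeq k + 1 ≤ m ∧ m ≤ nSeq k + 2 ^ (nSeq k + 1)) ∨
       ∃ j : ℕ, 3 ≤ j ∧ j ≤ 2 ^ (nSeq k + 1) + 2 ∧ m = j * 2 ^ (nSeq k)}

/-- Counting function: number of elements of `A` that are at most `n`. -/
noncomputable def countUpTo (A : Set ℕ) (n : ℕ) : ℕ := (A ∩ Set.Iic n).ncard

open Filter Set Topology

lemma Filter.liminf_le_of_comp_le_of_tendsto {α β : Type*} {l : Filter α} {l' : Filter β}
    [l'.NeBot] {f : α → ℝ} {g : β → ℝ} {φ : β → α} {c : ℝ}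
    (hf : IsBoundedUnder (· ≥ ·) l f) (hφ : Tendsto φ l' l) (hfg : ∀ k, f (φ k) ≤ g k)
    (hg : Tendsto g l' (𝓝 c)) : liminf f l ≤ c := by
  refine le_of_forall_pos_le_add fun ε hε => liminf_le_of_frequently_le ?_ hf
  have hg_le : ∀ᶠ k in l', g k ≤ c + ε := hg.eventually (eventually_le_nhds (by linarith))
  exact hφ.frequently (hg_le.mono fun k hk => (hfg k).trans hk).frequently

lemma nSeq_strictMono : StrictMono nSeq :=
  strictMono_nat_of_lt_succ fun k => (Nat.lt_two_pow_self).trans_le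
    (Nat.pow_le_pow_right two_pos (by omega))

lemma sqrt_nSeq_succ (k : ℕ) : √(nSeq (k + 1) : ℝ) = 2 ^ (nSeq k + 1) := by
  rw [Real.sqrt_eq_iff_eq_sq (by positivity) (by positivity), nSeq]
  push_cast
  ring

lemma Ablock_eq_Icc_union_image (k : ℕ) :
    Ablock k = Icc (nSeq k + 1) (nSeq k + 2 ^ (nSeq k + 1)) ∪
      (· * 2 ^ nSeq k) '' Icc 3 (2 ^ (nSeq k + 1) + 2) := by
  ext m
  simp [Ablock, and_assoc, eq_comm]

lemma ncard_Ablock_le (k : ℕ) : (Ablock k).ncard ≤ 2 ^ (nSeq k + 2) := by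
  rw [Ablock_eq_Icc_union_image]
  calc _ ≤ (Icc (nSeq k + 1) (nSeq k + 2 ^ (nSeq k + 1))).ncard
        + (Icc 3 (2 ^ (nSeq k + 1) + 2)).ncard :=
        (ncard_union_le _ _).trans (Nat.add_le_add_left (ncard_image_le (finite_Icc _ _)) _)
    _ = 2 ^ (nSeq k + 2) := by
        rw [ncard_Icc_nat, ncard_Icc_nat, pow_succ 2 (nSeq k + 1)]
        omega

lemma nSeq_lt_of_mem_Ablock {k m : ℕ} (hm : m ∈ Ablock k) : nSeq k < m := by
  rcases hm with h | ⟨j, hj, -, rfl⟩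
  · omega
  · have := Nat.lt_two_pow_self (n := nSeq k)
    nlinarith

lemma le_nSeq_succ_of_mem_Ablock {k m : ℕ} (hm : m ∈ Ablock k) : m ≤ nSeq (k + 1) := by
  have hN : nSeq (k + 1) = 2 ^ (2 * nSeq k + 1) + 2 ^ (2 * nSeq k + 1) := by rw [nSeq]; ring
  have hpow : 2 ^ (nSeq k + 1) ≤ 2 ^ (2 * nSeq k + 1) := Nat.pow_le_pow_right two_pos (by omega)
  rcases hm with h | ⟨j, -, hj, rfl⟩
  · have := Nat.lt_two_pow_self (n := nSeq k)
    omega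
  · have hprod : (2 ^ (nSeq k + 1) + 2) * 2 ^ nSeq k =
        2 ^ (2 * nSeq k + 1) + 2 ^ (nSeq k + 1) := by ring
    have := Nat.mul_le_mul_right (2 ^ nSeq k) hj
    omega

lemma iUnion_Ablock_inter_Iic_subset (k : ℕ) :
    (⋃ j, Ablock j) ∩ Iic (nSeq (k + 1)) ⊆ Iic (nSeq k) ∪ Ablock k := by
  rintro m ⟨hm, hmn⟩
  obtain ⟨j, hj⟩ := mem_iUnion.mp hm
  rcases lt_trichotomy j k with hjk | rfl | hkj
  · exact Or.inl ((le_nSeq_succ_of_mem_Ablock hj).trans (nSeq_strictMono.monotone hjk))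
  · exact Or.inr hj
  · have := (nSeq_strictMono.monotone hkj).trans_lt (nSeq_lt_of_mem_Ablock hj)
    exact absurd hmn (not_le.mpr this)

lemma countUpTo_nSeq_succ_le (k : ℕ) :
    countUpTo (⋃ j, Ablock j) (nSeq (k + 1)) ≤ nSeq k + 1 + 2 ^ (nSeq k + 2) := by
  have hfin : (Ablock k).Finite := (finite_Iic _).subset fun _ => le_nSeq_succ_of_mem_Ablock
  calc _ ≤ (Iic (nSeq k) ∪ Ablock k).ncard :=
        ncard_le_ncard (iUnion_Ablock_inter_Iic_subset k) ((finite_Iic _).union hfin)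
    _ ≤ (Iic (nSeq k)).ncard + (Ablock k).ncard := ncard_union_le _ _
    _ ≤ _ := by rw [ncard_Iic_nat]; exact Nat.add_le_add_left (ncard_Ablock_le k) _

lemma countUpTo_div_sqrt_nSeq_succ_le (k : ℕ) :
    (countUpTo (⋃ j, Ablock j) (nSeq (k + 1)) : ℝ) / √(nSeq (k + 1) : ℝ)
      ≤ 2 + (nSeq k + 1 : ℝ) / 2 ^ (nSeq k + 1) := by
  rw [sqrt_nSeq_succ, div_le_iff₀ (by positivity), add_mul, div_mul_cancel₀ _ (by positivity)]
  have := countUpTo_nSeq_succ_le k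
  calc _ ≤ ((nSeq k + 1 + 2 ^ (nSeq k + 2) : ℕ) : ℝ) := by exact_mod_cast this
    _ = _ := by push_cast; ring

lemma tendsto_two_add_div_two_pow :
    Tendsto (fun m : ℕ => 2 + (m : ℝ) / 2 ^ m) atTop (𝓝 2) := by
  simpa using (tendsto_pow_const_div_const_pow_of_one_lt 1 one_lt_two).const_add (2 : ℝ)

theorem stmt_3 :
    Filter.liminf
      (fun n : ℕ => (countUpTo (⋃ k, Ablock k) n : ℝ) / Real.sqrt n) Filter.atTop ≤ 2 := by
  have hbdd : IsBoundedUnder (· ≥ ·) atTop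
      (fun n : ℕ => (countUpTo (⋃ k, Ablock k) n : ℝ) / Real.sqrt n) :=
    isBoundedUnder_of ⟨0, fun n => by positivity⟩
  have hseq : Tendsto (fun k => nSeq k + 1) atTop atTop :=
    (tendsto_add_atTop_nat 1).comp nSeq_strictMono.tendsto_atTop
  refine liminf_le_of_comp_le_of_tendsto hbdd
    (nSeq_strictMono.tendsto_atTop.comp (tendsto_add_atTop_nat 1))
    (fun k => ?_) (tendsto_two_add_div_two_pow.comp hseq)
  simpa using countUpTo_div_sqrt_nSeq_succ_le k
end

section
/- Let B_k = { Σ_{i=0}^{k-1} ε_i 4^i : ε_i ∈ {1,2} } and A = ⋃_{k≥1} ⋃_{i=0}^{8} (i·4^{k-1} + B_k). Then for every integer n ≥ 3, there exist a, b ∈ A with a < b < n such that 2b = a + n (i.e., A is an AP₃-covering sequence). -/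
/-!
Choose `P = 4 ^ k` with `3 P ≤ n < 16 P` and write `n = s P + m` with `0 ≤ s ≤ 12` and
`3 P ≤ m < 4 P`. Digit by digit in base 4, every `m < 4 ^ (k + 1)` satisfies `2 b₀ = a₀ + m` for some
`a₀, b₀ ∈ B_{k+1}`, since each digit `r ∈ {0,1,2,3}` is `2β - α` with `α, β ∈ {1, 2}`; moreover
`b₀ < 3 P`. With `i = ⌈s / 2⌉` and `j = 2 i - s ∈ {0, 1}`, the elements `b = i P + b₀` and
`a = j P + a₀` of `A` satisfy `2 b = a + n` and `b < s P + 3 P ≤ n`, hence also `a < b`.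
-/

/-- B_k: integers whose k-digit base-4 expansion uses only digits 1 and 2. -/
def Bset (k : ℕ) : Set ℕ :=
  {m | ∃ ε : ℕ → ℕ, (∀ i < k, ε i = 1 ∨ ε i = 2) ∧
        m = ∑ i ∈ Finset.range k, ε i * 4 ^ i}

/-- A = ⋃_{k ≥ 1} ⋃_{0 ≤ i ≤ 8} (i·4^{k-1} + B_k). -/
def Aset : Set ℕ :=
  {m | ∃ k : ℕ, 1 ≤ k ∧ ∃ i : ℕ, i ≤ 8 ∧ ∃ b ∈ Bset k, m = i * 4 ^ (k - 1) + b}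

@[simp]
lemma Bset_zero : Bset 0 = {0} := by
  ext m
  simp [Bset]

lemma mem_Bset_succ {k m : ℕ} :
    m ∈ Bset (k + 1) ↔ ∃ d, (d = 1 ∨ d = 2) ∧ ∃ x ∈ Bset k, m = d + 4 * x := by
  constructor
  · rintro ⟨ε, hε, rfl⟩
    refine ⟨ε 0, hε 0 k.succ_pos, ∑ i ∈ Finset.range k, ε (i + 1) * 4 ^ i,
      ⟨fun i => ε (i + 1), fun i hi => hε (i + 1) (by omega), rfl⟩, ?_⟩
    rw [Finset.sum_range_succ', Finset.mul_sum]
    simp only [pow_succ, pow_zero]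
    rw [add_comm]
    congr 1
    · ring
    · exact Finset.sum_congr rfl fun i _ => by ring
  · rintro ⟨d, hd, x, ⟨ε, hε, rfl⟩, rfl⟩
    refine ⟨fun i => if i = 0 then d else ε (i - 1), fun i hi => ?_, ?_⟩
    · rcases i with _ | i
      · simpa using hd
      · simpa using hε i (by omega)
    · rw [Finset.sum_range_succ', Finset.mul_sum]
      simp only [pow_succ, pow_zero, add_tsub_cancel_right, Nat.add_one_ne_zero, if_false,
        if_true, mul_one]
      rw [add_comm]
      congr 1
      exact Finset.sum_congr rfl fun i _ => by ring

/-- The largest element of `B_k` is `22…2` in base 4, i.e. `2 (4 ^ k - 1) / 3`. -/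
lemma three_mul_add_two_le_of_mem_Bset {k m : ℕ} (hm : m ∈ Bset k) : 3 * m + 2 ≤ 2 * 4 ^ k := by
  induction k generalizing m with
  | zero => simp_all
  | succ k ih =>
    obtain ⟨d, hd, x, hx, rfl⟩ := mem_Bset_succ.mp hm
    have := ih hx
    rw [pow_succ]
    omega

lemma exists_mem_Bset_two_mul_eq_add {k m : ℕ} (hm : m < 4 ^ k) :
    ∃ b ∈ Bset k, ∃ a ∈ Bset k, 2 * b = a + m := by
  induction k generalizing m with
  | zero => exact ⟨0, by simp, 0, by simp, by simp_all⟩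
  | succ k ih =>
    obtain ⟨b, hb, a, ha, hab⟩ := ih (m := m / 4) (by rw [pow_succ] at hm; omega)
    have hdigit : ∃ β, (β = 1 ∨ β = 2) ∧ ∃ α, (α = 1 ∨ α = 2) ∧ 2 * β = α + m % 4 := by
      have : m % 4 < 4 := Nat.mod_lt m (by norm_num)
      interval_cases m % 4
      exacts [⟨1, by simp, 2, by simp⟩, ⟨1, by simp, 1, by simp⟩, ⟨2, by simp, 2, by simp⟩,
        ⟨2, by simp, 1, by simp⟩]
    obtain ⟨β, hβ, α, hα, hβα⟩ := hdigit
    exact ⟨β + 4 * b, mem_Bset_succ.mpr ⟨β, hβ, b, hb, rfl⟩,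
      α + 4 * a, mem_Bset_succ.mpr ⟨α, hα, a, ha, rfl⟩, by omega⟩

lemma add_mem_Aset {i k b : ℕ} (hi : i ≤ 8) (hb : b ∈ Bset (k + 1)) : i * 4 ^ k + b ∈ Aset :=
  ⟨k + 1, by omega, i, hi, b, hb, by simp⟩

lemma exists_Aset_ap3_of_le_of_lt {k n : ℕ} (h3 : 3 * 4 ^ k ≤ n) (h16 : n < 16 * 4 ^ k) :
    ∃ a ∈ Aset, ∃ b ∈ Aset, a < b ∧ b < n ∧ 2 * b = a + n := by
  set P := 4 ^ k
  have hP : 0 < P := by positivity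
  obtain ⟨s, m, hn, hm3, hm4, hs⟩ : ∃ s m, n = s * P + m ∧ 3 * P ≤ m ∧ m < 4 * P ∧ s ≤ 12 := by
    refine ⟨n / P - 3, n % P + 3 * P, ?_, by omega, ?_, ?_⟩
    · have h3P : 3 * P ≤ n / P * P :=
        Nat.mul_le_mul_right P ((Nat.le_div_iff_mul_le hP).mpr h3)
      have := Nat.div_add_mod' n P
      rw [Nat.sub_mul]
      omega
    · have := Nat.mod_lt n hP
      omega
    · have := (Nat.div_lt_iff_lt_mul hP).mpr h16
      omega
  obtain ⟨b₀, hb₀, a₀, ha₀, hab₀⟩ := exists_mem_Bset_two_mul_eq_add (k := k + 1) (m := m)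
    (by rw [pow_succ]; omega)
  have hb₀P : b₀ < 3 * P := by
    have := three_mul_add_two_le_of_mem_Bset hb₀
    rw [pow_succ] at this
    omega
  set i := (s + 1) / 2
  set j := 2 * i - s
  have hij : 2 * i = j + s := by omega
  have hiP : i * P ≤ s * P := Nat.mul_le_mul_right P (by omega)
  have hap : 2 * (i * P + b₀) = (j * P + a₀) + n := by
    rw [hn, mul_add, ← mul_assoc, hij, hab₀]
    ring
  exact ⟨j * P + a₀, add_mem_Aset (by omega) ha₀, i * P + b₀, add_mem_Aset (by omega) hb₀,
    by omega, by omega, hap⟩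

theorem stmt_6 :
    ∀ n : ℕ, 3 ≤ n → ∃ a ∈ Aset, ∃ b ∈ Aset, a < b ∧ b < n ∧ 2 * b = a + n := by
  intro n hn
  have h4k : 4 ^ Nat.log 4 (n / 3) ≤ n / 3 := Nat.pow_log_le_self 4 (by omega)
  have h4k' : n / 3 < 4 ^ (Nat.log 4 (n / 3) + 1) := Nat.lt_pow_succ_log_self (by norm_num) _
  rw [pow_succ] at h4k'
  exact exists_Aset_ap3_of_le_of_lt (k := Nat.log 4 (n / 3)) (by omega) (by omega)
end
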